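/- Error decomposition into encoder and forecaster error (Proposition A.5 / decomp_error): Let X be a measurable space, C a metric space equipped with a probability measure ν, and Y a normed vector space. For each c ∈ C let μ_c be a probability measure on X (the conditional data distribution of task c), measurable in c. Let f : X → Y be the measurable ground-truth forecasting map, let F : X × C → Y be a measurable forecaster, and let ĝ : X → C be a measurable encoder. Assume: (i) Lipschitz continuity of the forecaster in the task variable: there is γ ≥ 0 such that for all x ∈ X and all c, c' ∈ C, ‖F(x, c) − F(x, c')‖ ≤ γ · dist(c, c'); and (ii) the functions (c, x) ↦ dist(ĝ(x), c) and (c, x) ↦ ‖F(x, c) − f(x)‖ are integrable with respect to the measure ∫ μ_c dν(c). Then ∫_C ∫_X ‖F(x, ĝ(x)) − f(x)‖ dμ_c(x) dν(c) ≤ γ ∫_C ∫_X dist(ĝ(x), c) dμ_c(x) dν(c) + ∫_C ∫_X ‖F(x, c) − f(x)‖ dμ_c(x) dν(c); i.e., ε_X(F(·, ĝ(·))) ≤ γ · ε_enc(ĝ) + E_{c∼ν}[ ε_c(F(·, c)) ]. -/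

import Mathlib

open MeasureTheory ProbabilityTheory

/-! The forecaster error at the predicted task `ĝ x` exceeds the error at the true task `c` by
at most `‖F x (ĝ x) - F x c‖ ≤ γ · dist (ĝ x) c`; integrating this pointwise bound against
`ν ⊗ₘ κ` and splitting the right-hand side by linearity gives the decomposition. -/

lemma norm_sub_le_mul_dist_add_norm_sub {C Y : Type*} [PseudoMetricSpace C]
    [SeminormedAddCommGroup Y] {G : C → Y} {γ : ℝ}
    (hG : ∀ c c', ‖G c - G c'‖ ≤ γ * dist c c') (c c' : C) (y : Y) :
    ‖G c - y‖ ≤ γ * dist c c' + ‖G c' - y‖ :=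
  calc ‖G c - y‖ ≤ ‖G c - G c'‖ + ‖G c' - y‖ := norm_sub_le_norm_sub_add_norm_sub _ _ _
    _ ≤ γ * dist c c' + ‖G c' - y‖ := by gcongr; exact hG c c'

namespace MeasureTheory.Measure

variable {α β : Type*} [MeasurableSpace α] [MeasurableSpace β]
  {μ : Measure α} [SFinite μ] {κ : Kernel α β} [IsSFiniteKernel κ]

lemma integral_integral_mono_of_nonneg {φ ψ : α → β → ℝ} (hφ : ∀ a b, 0 ≤ φ a b)
    (hψ : Integrable (Function.uncurry ψ) (μ ⊗ₘ κ)) (hle : ∀ a b, φ a b ≤ ψ a b) :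
    ∫ a, ∫ b, φ a b ∂(κ a) ∂μ ≤ ∫ a, ∫ b, ψ a b ∂(κ a) ∂μ := by
  obtain ⟨hψ_ae, -⟩ := (integrable_compProd_iff hψ.aestronglyMeasurable).1 hψ
  refine integral_mono_of_nonneg (.of_forall fun a => integral_nonneg (hφ a))
    hψ.integral_compProd ?_
  filter_upwards [hψ_ae] with a hψa
  exact integral_mono_of_nonneg (.of_forall (hφ a)) hψa (.of_forall (hle a))

end MeasureTheory.Measure

theorem error_decomposition_encoder_forecaster_general
    {X C Y : Type*} [MeasurableSpace X] [MeasurableSpace C] [MetricSpace C]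
    [NormedAddCommGroup Y]
    (ν : Measure C) [IsProbabilityMeasure ν]
    (κ : Kernel C X) [IsMarkovKernel κ]
    (f : X → Y)
    (F : X → C → Y)
    (ghat : X → C)
    (γ : ℝ)
    (hLip : ∀ (x : X) (c c' : C), ‖F x c - F x c'‖ ≤ γ * dist c c')
    (hint₁ : Integrable (fun p : C × X => dist (ghat p.2) p.1) (ν ⊗ₘ κ))
    (hint₂ : Integrable (fun p : C × X => ‖F p.2 p.1 - f p.2‖) (ν ⊗ₘ κ)) :
    ∫ c, ∫ x, ‖F x (ghat x) - f x‖ ∂(κ c) ∂ν ≤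
      γ * ∫ c, ∫ x, dist (ghat x) c ∂(κ c) ∂ν + ∫ c, ∫ x, ‖F x c - f x‖ ∂(κ c) ∂ν := by
  have hsum : Integrable (fun p : C × X => γ * dist (ghat p.2) p.1 + ‖F p.2 p.1 - f p.2‖)
      (ν ⊗ₘ κ) := (hint₁.const_mul γ).add hint₂
  calc ∫ c, ∫ x, ‖F x (ghat x) - f x‖ ∂(κ c) ∂ν
      ≤ ∫ c, ∫ x, (γ * dist (ghat x) c + ‖F x c - f x‖) ∂(κ c) ∂ν :=
        Measure.integral_integral_mono_of_nonneg (fun _ _ => norm_nonneg _) hsum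
          fun c x => norm_sub_le_mul_dist_add_norm_sub (hLip x) (ghat x) c (f x)
    _ = γ * ∫ c, ∫ x, dist (ghat x) c ∂(κ c) ∂ν + ∫ c, ∫ x, ‖F x c - f x‖ ∂(κ c) ∂ν := by
        rw [← Measure.integral_compProd hsum, integral_add (hint₁.const_mul γ) hint₂,
          integral_const_mul, Measure.integral_compProd hint₁, Measure.integral_compProd hint₂]

/-- **Error decomposition into encoder and forecaster error** (Proposition A.5):
Let `X` be a measurable space, `C` a metric space equipped with a probability measure `ν`,
`Y` a normed vector space.  The conditional data distributions `μ_c` are given by a Markov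
kernel `κ : Kernel C X` (a measurable family of probability measures).  If the forecaster
`F` is `γ`-Lipschitz in the task variable uniformly in `x`, and the functions
`(c, x) ↦ dist(ĝ(x), c)` and `(c, x) ↦ ‖F(x, c) − f(x)‖` are integrable with respect to
the measure `∫ μ_c dν(c)` (i.e. `ν ⊗ₘ κ`), then
`ε_X(F(·, ĝ(·))) ≤ γ · ε_enc(ĝ) + E_{c∼ν}[ε_c(F(·, c))]`. -/
theorem error_decomposition_encoder_forecaster
    {X C Y : Type*} [MeasurableSpace X] [MeasurableSpace C] [MetricSpace C]
    [NormedAddCommGroup Y] [NormedSpace ℝ Y] [MeasurableSpace Y]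
    (ν : Measure C) [IsProbabilityMeasure ν]
    (κ : Kernel C X) [IsMarkovKernel κ]
    (f : X → Y) (hf : Measurable f)
    (F : X → C → Y) (hF : Measurable fun p : X × C => F p.1 p.2)
    (ghat : X → C) (hghat : Measurable ghat)
    (γ : ℝ) (hγ : 0 ≤ γ)
    (hLip : ∀ (x : X) (c c' : C), ‖F x c - F x c'‖ ≤ γ * dist c c')
    (hint₁ : Integrable (fun p : C × X => dist (ghat p.2) p.1) (ν ⊗ₘ κ))
    (hint₂ : Integrable (fun p : C × X => ‖F p.2 p.1 - f p.2‖) (ν ⊗ₘ κ)) :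
    ∫ c, ∫ x, ‖F x (ghat x) - f x‖ ∂(κ c) ∂ν ≤
      γ * ∫ c, ∫ x, dist (ghat x) c ∂(κ c) ∂ν + ∫ c, ∫ x, ‖F x c - f x‖ ∂(κ c) ∂ν :=
  error_decomposition_encoder_forecaster_general ν κ f F ghat γ hLip hint₁ hint₂
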